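/- For every integer k ≥ 1 and 0 < t < 1/k², the Gegenbauer polynomial C_k^{3/2} satisfies C_k^{3/2}(1) - B(k) t ≤ C_k^{3/2}(1-t) ≤ C_k^{3/2}(1) - B(k) t + K₀ t², where B(k) = k(k+1)(k+2)(k+3)/8 and K₀ is some finite positive constant (which may depend on k). -/

import Mathlib

/-- The Gegenbauer polynomial `C_n^{3/2}`, via its recurrence, as a function on `ℝ`. -/
noncomputable def gegenbauerC : ℕ → ℝ → ℝ
  | 0 => fun _ => 1
  | 1 => fun x => 3*x
  | (n+2) => fun x =>
      ((2*(n:ℝ)+5) * x * gegenbauerC (n+1) x - ((n:ℝ)+3) * gegenbauerC n x) / ((n:ℝ)+2)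

/-!
Around `x = 1` the polynomial has the Taylor expansion
`C_k(1 - t) = ∑_{j ≤ k} (-1)^j c_j t^j` with `c_j ≥ 0`, `c_0 = C_k(1)`, `c_1 = B(k)`, and
`c_{j+1} / c_j = (k + j + 3)(k - j) / (2 (j + 1)(j + 2)) ≤ k²`.
So for `t ≤ 1/k²` the terms `c_j t^j` decrease, and the alternating series bounds
`S₂ ≤ C_k(1 - t) ≤ S₃` on the partial sums give the claim with `K₀ = c_2 + 1`.
-/

open Polynomial Filter Topology Finset
open scoped Nat

theorem Nat.cast_descFactorial_succ {R : Type*} [Ring R] (n k : ℕ) :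
    (n.descFactorial (k + 1) : R) = n.descFactorial k * (n - k) := by
  rw [← descPochhammer_eval_eq_descFactorial, descPochhammer_succ_eval,
    descPochhammer_eval_eq_descFactorial]

theorem Polynomial.tendsto_sum_range_coeff_mul_pow {R : Type*} [Semiring R] [TopologicalSpace R]
    (p : R[X]) (x : R) :
    Tendsto (fun n ↦ ∑ i ∈ range n, p.coeff i * x ^ i) atTop (𝓝 (p.eval x)) :=
  tendsto_atTop_of_eventually_const fun _ hn ↦ (eval_eq_sum_range' hn x).symm

/-- `c_j = Γ(k+j+3) / (2^(j+1) Γ(j+1) Γ(j+2) Γ(k-j+1))`; the descending factorial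
`(k+j+2)! / (k-j)!` makes it vanish for `j > k` without a case split. -/
noncomputable def gegenbauerCoeff (k j : ℕ) : ℝ :=
  (k + j + 2).descFactorial (2 * j + 2) / (2 ^ (j + 1) * j ! * (j + 1)!)

theorem gegenbauerCoeff_nonneg (k j : ℕ) : 0 ≤ gegenbauerCoeff k j := by
  unfold gegenbauerCoeff; positivity

theorem gegenbauerCoeff_eq_zero_of_lt {k j : ℕ} (h : k < j) : gegenbauerCoeff k j = 0 := by
  rw [gegenbauerCoeff, Nat.descFactorial_eq_zero_iff_lt.2 (by omega), Nat.cast_zero, zero_div]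

theorem gegenbauerCoeff_zero (k : ℕ) : gegenbauerCoeff k 0 = (k + 1) * (k + 2) / 2 := by
  simp [gegenbauerCoeff]

theorem gegenbauerCoeff_succ (k j : ℕ) :
    2 * (j + 1) * (j + 2) * gegenbauerCoeff k (j + 1)
      = (k + j + 3) * (k - j) * gegenbauerCoeff k j := by
  simp only [gegenbauerCoeff]
  rw [show k + (j + 1) + 2 = k + j + 2 + 1 by ring,
    show 2 * (j + 1) + 2 = 2 * j + 2 + 1 + 1 by ring, Nat.succ_descFactorial_succ, Nat.cast_mul,
    Nat.cast_descFactorial_succ, Nat.factorial_succ (j + 1), Nat.factorial_succ j]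
  push_cast
  field_simp
  ring

theorem gegenbauerCoeff_one (k : ℕ) :
    gegenbauerCoeff k 1 = k * (k + 1) * (k + 2) * (k + 3) / 8 := by
  linear_combination gegenbauerCoeff_succ k 0 / 4 + (k + 3) * k / 4 * gegenbauerCoeff_zero k

theorem gegenbauerCoeff_recurrence_zero (n : ℕ) :
    (n + 2) * gegenbauerCoeff (n + 2) 0
      = (2 * n + 5) * gegenbauerCoeff (n + 1) 0 - (n + 3) * gegenbauerCoeff n 0 := by
  simp only [gegenbauerCoeff_zero]; push_cast; ring

theorem gegenbauerCoeff_recurrence_succ (n j : ℕ) :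
    (n + 2) * gegenbauerCoeff (n + 2) (j + 1)
      = (2 * n + 5) * (gegenbauerCoeff (n + 1) (j + 1) + gegenbauerCoeff (n + 1) j)
        - (n + 3) * gegenbauerCoeff n (j + 1) := by
  -- all four descending factorials are multiples of `P = (n+j+3) ⋯ (n-j+2)`, which leaves
  -- a polynomial identity in `n` and `j`
  set P : ℝ := ↑((n + j + 3).descFactorial (2 * j + 2))
  have h₀ : ((n + j + 3).descFactorial (2 * j + 2 + 1 + 1) : ℝ)
      = P * (n + 1 - j) * (n - j) := by
    rw [Nat.cast_descFactorial_succ, Nat.cast_descFactorial_succ]; push_cast; ring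
  have h₁ : ((n + j + 3 + 1).descFactorial (2 * j + 2 + 1 + 1) : ℝ)
      = (n + j + 4) * (n + 1 - j) * P := by
    rw [Nat.succ_descFactorial_succ, Nat.cast_mul, Nat.cast_descFactorial_succ]; push_cast; ring
  have h₂ : ((n + j + 3 + 1 + 1).descFactorial (2 * j + 2 + 1 + 1) : ℝ)
      = (n + j + 5) * (n + j + 4) * P := by
    rw [Nat.succ_descFactorial_succ, Nat.succ_descFactorial_succ]; push_cast; ring
  simp only [gegenbauerCoeff]
  rw [show n + 2 + (j + 1) + 2 = n + j + 3 + 1 + 1 by ring,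
    show n + 1 + (j + 1) + 2 = n + j + 3 + 1 by ring, show n + (j + 1) + 2 = n + j + 3 by ring,
    show n + 1 + j + 2 = n + j + 3 by ring, show 2 * (j + 1) + 2 = 2 * j + 2 + 1 + 1 by ring,
    h₀, h₁, h₂, Nat.factorial_succ (j + 1), Nat.factorial_succ j]
  push_cast
  field_simp
  ring

noncomputable def gegenbauerTaylor (k : ℕ) : ℝ[X] :=
  ∑ j ∈ range (k + 1), monomial j (gegenbauerCoeff k j)

theorem coeff_gegenbauerTaylor (k j : ℕ) :
    (gegenbauerTaylor k).coeff j = gegenbauerCoeff k j := by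
  simp only [gegenbauerTaylor, finsetSum_coeff, coeff_monomial, sum_ite_eq', mem_range]
  split_ifs with h
  · rfl
  · exact (gegenbauerCoeff_eq_zero_of_lt (by omega)).symm

theorem gegenbauerTaylor_recurrence (n : ℕ) :
    C ((n : ℝ) + 2) * gegenbauerTaylor (n + 2)
      = C (2 * (n : ℝ) + 5) * (1 + X) * gegenbauerTaylor (n + 1)
        - C ((n : ℝ) + 3) * gegenbauerTaylor n := by
  ext (_ | j)
  · simp [coeff_gegenbauerTaylor, gegenbauerCoeff_recurrence_zero]
  · simp only [map_add, map_natCast, add_mul, coeff_add, coeff_natCast_mul, coeff_gegenbauerTaylor,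
      coeff_C_mul, map_mul, mul_assoc, one_mul, coeff_sub, coeff_X_mul]
    linear_combination gegenbauerCoeff_recurrence_succ n j

theorem gegenbauerC_eq_eval_gegenbauerTaylor (k : ℕ) (x : ℝ) :
    gegenbauerC k x = (gegenbauerTaylor k).eval (x - 1) := by
  induction k using Nat.twoStepInduction generalizing x with
  | zero => simp [gegenbauerC, gegenbauerTaylor, gegenbauerCoeff]
  | one =>
    simp only [gegenbauerC, gegenbauerTaylor, sum_range_succ, range_zero, sum_empty, zero_add,
      eval_add, eval_monomial, gegenbauerCoeff_zero, gegenbauerCoeff_one]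
    push_cast
    ring
  | more n ih₀ ih₁ =>
    have h := congrArg (eval (x - 1)) (gegenbauerTaylor_recurrence n)
    simp only [eval_mul, eval_sub, eval_add, eval_C, eval_one, eval_X, add_sub_cancel] at h
    simp only [gegenbauerC, ih₀, ih₁]
    rw [div_eq_iff (by positivity)]
    linear_combination -h

theorem tendsto_alternating_sum_gegenbauerCoeff (k : ℕ) (t : ℝ) :
    Tendsto (fun n ↦ ∑ i ∈ range n, (-1) ^ i * (gegenbauerCoeff k i * t ^ i)) atTop
      (𝓝 (gegenbauerC k (1 - t))) := by
  rw [gegenbauerC_eq_eval_gegenbauerTaylor, sub_sub_cancel_left]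
  refine ((gegenbauerTaylor k).tendsto_sum_range_coeff_mul_pow (-t)).congr fun n ↦ ?_
  simp only [coeff_gegenbauerTaylor, neg_pow t]
  exact sum_congr rfl fun _ _ ↦ by ring

theorem gegenbauerCoeff_succ_mul_le {k : ℕ} {t : ℝ} (ht : 0 ≤ t)
    (hkt : (k : ℝ) ^ 2 * t ≤ 1) (j : ℕ) :
    gegenbauerCoeff k (j + 1) * t ≤ gegenbauerCoeff k j := by
  have hc := gegenbauerCoeff_nonneg k j
  have hc' := gegenbauerCoeff_nonneg k (j + 1)
  have hj : (0 : ℝ) ≤ j := j.cast_nonneg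
  have hk : (k : ℝ) ≤ k ^ 2 := by exact_mod_cast Nat.le_self_pow two_ne_zero k
  have hbound : (k + j + 3) * (k - j) * t ≤ 4 :=
    calc (k + j + 3) * (k - j) * t = (k * (k + 3) - j * (j + 3)) * t := by ring
      _ ≤ 4 * k ^ 2 * t := by gcongr; nlinarith
      _ ≤ 4 := by linarith
  have h4 : 4 * (gegenbauerCoeff k (j + 1) * t) ≤ 4 * gegenbauerCoeff k j :=
    calc 4 * (gegenbauerCoeff k (j + 1) * t)
        ≤ 2 * (j + 1) * (j + 2) * (gegenbauerCoeff k (j + 1) * t) := by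
          gcongr; nlinarith
      _ = (k + j + 3) * (k - j) * t * gegenbauerCoeff k j := by
          linear_combination t * gegenbauerCoeff_succ k j
      _ ≤ 4 * gegenbauerCoeff k j := by gcongr
  linarith

theorem antitone_gegenbauerCoeff_mul_pow {k : ℕ} {t : ℝ} (ht : 0 ≤ t)
    (hkt : (k : ℝ) ^ 2 * t ≤ 1) : Antitone fun j ↦ gegenbauerCoeff k j * t ^ j :=
  antitone_nat_of_succ_le fun j ↦ by
    rw [pow_succ, ← mul_assoc, mul_right_comm]
    exact mul_le_mul_of_nonneg_right (gegenbauerCoeff_succ_mul_le ht hkt j) (pow_nonneg ht j)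

theorem gegenbauer_taylor_bounds_general (k : ℕ) :
    ∃ K₀ : ℝ, 0 < K₀ ∧ ∀ t : ℝ, 0 < t → t < 1/(k:ℝ)^2 →
      gegenbauerC k 1 - ((k:ℝ)*(k+1)*(k+2)*(k+3)/8) * t ≤ gegenbauerC k (1 - t)
      ∧ gegenbauerC k (1 - t)
          ≤ gegenbauerC k 1 - ((k:ℝ)*(k+1)*(k+2)*(k+3)/8) * t + K₀ * t^2 := by
  refine ⟨gegenbauerCoeff k 2 + 1, by linarith [gegenbauerCoeff_nonneg k 2],
    fun t ht htk ↦ ?_⟩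
  have hk : (0 : ℝ) < (k : ℝ) ^ 2 := one_div_pos.1 (ht.trans htk)
  have hkt : (k : ℝ) ^ 2 * t ≤ 1 := by
    rw [lt_div_iff₀ hk] at htk; linarith
  have hlim := tendsto_alternating_sum_gegenbauerCoeff k t
  have hanti := antitone_gegenbauerCoeff_mul_pow ht.le hkt
  have hlower := hanti.alternating_series_le_tendsto hlim 1
  have hupper := hanti.tendsto_le_alternating_series hlim 1
  have hC1 : gegenbauerC k 1 = gegenbauerCoeff k 0 := by
    rw [gegenbauerC_eq_eval_gegenbauerTaylor, sub_self, ← coeff_zero_eq_eval_zero,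
      coeff_gegenbauerTaylor]
  simp only [sum_range_succ, range_zero, sum_empty, zero_add, pow_zero, pow_one, one_mul,
    mul_one, neg_one_mul] at hlower hupper
  rw [hC1, ← gegenbauerCoeff_one]
  constructor
  · linarith
  · nlinarith [gegenbauerCoeff_nonneg k 2]

theorem gegenbauer_taylor_bounds (k : ℕ) (hk : 1 ≤ k) :
    ∃ K₀ : ℝ, 0 < K₀ ∧ ∀ t : ℝ, 0 < t → t < 1/(k:ℝ)^2 →
      gegenbauerC k 1 - ((k:ℝ)*(k+1)*(k+2)*(k+3)/8) * t ≤ gegenbauerC k (1 - t)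
      ∧ gegenbauerC k (1 - t)
          ≤ gegenbauerC k 1 - ((k:ℝ)*(k+1)*(k+2)*(k+3)/8) * t + K₀ * t^2 :=
  gegenbauer_taylor_bounds_general k
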